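/- Let a(z) := γ_{k,ρ}(z) - μ tr(z) on the k-positive cone Γ, where μ > 0 is such that γ_{k,1}(w) > μ tr(w) for w = (0,…,0,1,…,1) with m zeros, for every 0 ≤ m ≤ k-1. Then a(1,…,1) > 0, a is symmetric, concave, and one-homogeneous on Γ, and consequently for any z ∈ Γ with z₁ ≤ ⋯ ≤ z_n one has ∂γ_{k,ρ}/∂z₁ (z) ≥ μ. -/

import Mathlib

open Finset

def kCone (n k : ℕ) : Set (Fin n → ℝ) :=
  {z | ∀ s : Finset (Fin n), s.card = k → 0 < ∑ i ∈ s, z i}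

noncomputable def gammaOne (n k : ℕ) (z : Fin n → ℝ) : ℝ :=
  (∑ s ∈ Finset.powersetCard k (Finset.univ : Finset (Fin n)), (∑ i ∈ s, z i)⁻¹)⁻¹

noncomputable def gammaRho (n k : ℕ) (ρ : ℝ) (z : Fin n → ℝ) : ℝ :=
  ((∑ s ∈ Finset.powersetCard k (Finset.univ : Finset (Fin n)), ρ / (∑ i ∈ s, z i)) +
    (1 - ρ) / (∑ i, z i))⁻¹

/-!
`γ_{k,ρ}` is the reciprocal of a nonnegative combination of reciprocals of positive linear
forms, and such a harmonic sum is concave: for `a, b > 0` and every `t`,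
`c / (a X + b Y) ≤ t² / a · c / X + (1 - t)² / b · c / Y` (Cauchy–Schwarz), and optimising `t`
turns this into concavity of the reciprocal. Symmetry and homogeneity are immediate, and
`a(1,…,1) > 0` follows from the case `m = 0` of the hypothesis since `γ_{k,ρ} ≥ γ_{k,1}` at
`(1,…,1)`.

For the derivative bound let `a` be symmetric, concave and one-homogeneous on an open symmetric
convex set. If `z₁ ≤ z_j`, concavity between `z` and `z` with coordinates `1, j` swapped gives
`∂_j a(z) ≤ ∂_1 a(z)` (when `z₁ = z_j`, symmetry gives equality). Euler's identity
`Da(z) z = a(z)` and concavity between `z` and `(1,…,1)` give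
`∑_j ∂_j a(z) = Da(z)(1,…,1) ≥ a(1,…,1) ≥ 0`, hence `n ∂_1 a(z) ≥ 0`.
-/

open Filter Topology

section Gradient

variable {E : Type*} [NormedAddCommGroup E] [NormedSpace ℝ E]

theorem ConcaveOn.sub_le_of_hasFDerivAt {S : Set E} {f : E → ℝ} {f' : E →L[ℝ] ℝ} {x y : E}
    (hf : ConcaveOn ℝ S f) (hx : x ∈ S) (hy : y ∈ S) (hf' : HasFDerivAt f f' x) :
    f y - f x ≤ f' (y - x) := by
  have hline : ConcaveOn ℝ (AffineMap.lineMap (k := ℝ) x y ⁻¹' S)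
      (f ∘ AffineMap.lineMap (k := ℝ) x y) :=
    hf.comp_affineMap _
  have hderiv : HasDerivAt (f ∘ AffineMap.lineMap (k := ℝ) x y) (f' (y - x)) 0 := by
    refine HasFDerivAt.comp_hasDerivAt (0 : ℝ) ?_ AffineMap.hasDerivAt_lineMap
    simpa using hf'
  simpa [slope_def_field] using
    hline.slope_le_of_hasDerivAt (x := 0) (y := 1) (by simpa using hx) (by simpa using hy)
      zero_lt_one hderiv

theorem HasFDerivAt.apply_self_of_homogeneous {f : E → ℝ} {f' : E →L[ℝ] ℝ} {x : E}
    (hf : HasFDerivAt f f' x) (hhom : ∀ s : ℝ, 0 < s → f (s • x) = s * f x) :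
    f' x = f x := by
  have hray : HasDerivAt (fun s : ℝ => f (s • x)) (f' x) 1 := by
    refine HasFDerivAt.comp_hasDerivAt (f := fun s : ℝ => s • x) (1 : ℝ) ?_ ?_
    · simpa using hf
    · simpa using (hasDerivAt_id (1 : ℝ)).smul_const x
  have hlin : HasDerivAt (fun s : ℝ => s * f x) (f x) 1 := by
    simpa using (hasDerivAt_id (1 : ℝ)).mul_const (f x)
  refine hray.unique (hlin.congr_of_eventuallyEq ?_)
  filter_upwards [lt_mem_nhds one_pos] with s hs using hhom s hs

end Gradient

theorem HasFDerivAt.apply_comp_perm {ι : Type*} [Fintype ι] {f : (ι → ℝ) → ℝ}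
    {f' : (ι → ℝ) →L[ℝ] ℝ} {z : ι → ℝ} (hf : HasFDerivAt f f' z) (σ : Equiv.Perm ι)
    (hfσ : ∀ᶠ w in 𝓝 z, f (w ∘ σ) = f w) (hzσ : z ∘ σ = z) (v : ι → ℝ) :
    f' (v ∘ σ) = f' v := by
  let P : (ι → ℝ) →L[ℝ] (ι → ℝ) := ContinuousLinearMap.pi fun i => ContinuousLinearMap.proj (σ i)
  have hcomp : HasFDerivAt (fun w => f (w ∘ σ)) (f'.comp P) z := by
    have hPz : P z = z := hzσ
    have hf'' : HasFDerivAt f f' (P z) := by rwa [hPz]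
    exact hf''.comp z P.hasFDerivAt
  have hunique : f' = f'.comp P :=
    hf.unique (hcomp.congr_of_eventuallyEq (hfσ.mono fun w hw => hw.symm))
  exact (congrArg (· v) hunique).symm

section Symmetric

variable {ι : Type*} [DecidableEq ι]

theorem comp_swap_sub_self {R : Type*} [Ring R] (z : ι → R) (i j : ι) :
    z ∘ Equiv.swap i j - z = (z j - z i) • (Pi.single i 1 - Pi.single j 1) := by
  ext l
  simp only [Pi.sub_apply, Pi.smul_apply, Function.comp_apply, Pi.single_apply, smul_eq_mul,
    Equiv.swap_apply_def]
  split_ifs <;> simp_all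

theorem Pi.single_comp_swap {M : Type*} [Zero M] (i j : ι) (x : M) :
    Pi.single i x ∘ Equiv.swap i j = Pi.single j x := by
  ext l
  simp only [Function.comp_apply, Pi.single_apply, Equiv.swap_apply_def]
  split_ifs <;> simp_all

variable [Fintype ι] {S : Set (ι → ℝ)} {f : (ι → ℝ) → ℝ} {f' : (ι → ℝ) →L[ℝ] ℝ} {z : ι → ℝ}

theorem ConcaveOn.fderiv_single_le_of_le (hf : ConcaveOn ℝ S f) (hS : IsOpen S)
    (hSσ : ∀ σ : Equiv.Perm ι, ∀ w ∈ S, w ∘ σ ∈ S)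
    (hfσ : ∀ σ : Equiv.Perm ι, ∀ w ∈ S, f (w ∘ σ) = f w)
    (hz : z ∈ S) (hf' : HasFDerivAt f f' z) {i j : ι} (hij : z i ≤ z j) :
    f' (Pi.single j 1) ≤ f' (Pi.single i 1) := by
  rcases hij.lt_or_eq with hlt | heq
  · have hgrad := hf.sub_le_of_hasFDerivAt hz (hSσ (Equiv.swap i j) z hz) hf'
    rw [hfσ _ z hz, sub_self, comp_swap_sub_self, map_smul, map_sub, smul_eq_mul] at hgrad
    exact sub_nonneg.1 ((mul_nonneg_iff_of_pos_left (sub_pos.2 hlt)).1 hgrad)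
  · have hzσ : z ∘ Equiv.swap i j = z := by
      ext l
      simp only [Function.comp_apply, Equiv.swap_apply_def]
      split_ifs <;> simp_all
    have hloc : ∀ᶠ w in 𝓝 z, f (w ∘ Equiv.swap i j) = f w :=
      eventually_of_mem (hS.mem_nhds hz) (hfσ _)
    rw [← Pi.single_comp_swap i j (1 : ℝ), hf'.apply_comp_perm _ hloc hzσ]

theorem ConcaveOn.fderiv_single_nonneg_of_isMin (hf : ConcaveOn ℝ S f) (hS : IsOpen S)
    (hSσ : ∀ σ : Equiv.Perm ι, ∀ w ∈ S, w ∘ σ ∈ S)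
    (hfσ : ∀ σ : Equiv.Perm ι, ∀ w ∈ S, f (w ∘ σ) = f w)
    (hhom : ∀ s : ℝ, 0 < s → ∀ w ∈ S, f (s • w) = s * f w)
    (h1 : (fun _ => 1) ∈ S) (hf1 : 0 ≤ f (fun _ => 1))
    (hz : z ∈ S) (hf' : HasFDerivAt f f' z) {i : ι} (hmin : ∀ j, z i ≤ z j) :
    0 ≤ f' (Pi.single i 1) := by
  have hEuler : f' z = f z := hf'.apply_self_of_homogeneous fun s hs => hhom s hs z hz
  have hgrad := hf.sub_le_of_hasFDerivAt hz h1 hf'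
  rw [map_sub, hEuler] at hgrad
  have hsum : f' (fun _ => 1) = ∑ j, f' (Pi.single j 1) := by
    rw [← map_sum, Finset.univ_sum_single]
  have hle : ∑ j, f' (Pi.single j 1) ≤ Fintype.card ι • f' (Pi.single i 1) :=
    Finset.sum_le_card_nsmul _ _ _ fun j _ =>
      hf.fderiv_single_le_of_le hS hSσ hfσ hz hf' (hmin j)
  rw [nsmul_eq_mul] at hle
  have hcard : (0 : ℝ) < Fintype.card ι := Nat.cast_pos.2 (Fintype.card_pos_iff.2 ⟨i⟩)
  exact (mul_nonneg_iff_of_pos_left hcard).1 (by linarith)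

end Symmetric

theorem div_add_le_sq_div_add_sq_div {a b X Y : ℝ} (ha : 0 < a) (hb : 0 < b) (hX : 0 < X)
    (hY : 0 < Y) {c : ℝ} (hc : 0 ≤ c) (t : ℝ) :
    c / (a * X + b * Y) ≤ t ^ 2 / a * (c / X) + (1 - t) ^ 2 / b * (c / Y) := by
  have hP := mul_pos ha hX
  have hQ := mul_pos hb hY
  have key : (a * X + b * Y)⁻¹ ≤ t ^ 2 / (a * X) + (1 - t) ^ 2 / (b * Y) := by
    rw [div_add_div _ _ hP.ne' hQ.ne', inv_eq_one_div, div_le_div_iff₀ (by positivity) (by positivity)]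
    nlinarith [sq_nonneg (t * (b * Y) - (1 - t) * (a * X)), mul_pos hP hQ]
  calc c / (a * X + b * Y) = c * (a * X + b * Y)⁻¹ := div_eq_mul_inv _ _
    _ ≤ c * (t ^ 2 / (a * X) + (1 - t) ^ 2 / (b * Y)) := mul_le_mul_of_nonneg_left key hc
    _ = _ := by field_simp

theorem concaveOn_inv_of_le_sq_div {E : Type*} [AddCommGroup E] [Module ℝ E] {S : Set E}
    {F : E → ℝ} (hS : Convex ℝ S) (hF : ∀ x ∈ S, 0 < F x)
    (hmix : ∀ x ∈ S, ∀ y ∈ S, ∀ a b : ℝ, 0 < a → 0 < b → a + b = 1 → ∀ t : ℝ,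
      F (a • x + b • y) ≤ t ^ 2 / a * F x + (1 - t) ^ 2 / b * F y) :
    ConcaveOn ℝ S fun x => (F x)⁻¹ := by
  refine ⟨hS, fun x hx y hy a b ha hb hab => ?_⟩
  rcases ha.eq_or_lt with rfl | ha
  · simp_all
  rcases hb.eq_or_lt with rfl | hb
  · simp_all
  have hFx := hF x hx
  have hFy := hF y hy
  set α := a / F x
  set β := b / F y
  have hα : 0 < α := div_pos ha hFx
  have hβ : 0 < β := div_pos hb hFy
  -- `t = α / (α + β)` minimises the right-hand side of `hmix`, where it equals `(α + β)⁻¹`.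
  have hopt : F (a • x + b • y) ≤ (α + β)⁻¹ := by
    convert hmix x hx y hy a b ha hb hab (α / (α + β)) using 1
    simp only [α, β]
    field_simp
    ring
  calc a • (F x)⁻¹ + b • (F y)⁻¹ = α + β := by simp only [smul_eq_mul, α, β, div_eq_mul_inv]
    _ ≤ (F (a • x + b • y))⁻¹ := by
      rw [← inv_inv (α + β)]
      exact inv_anti₀ (hF _ (hS hx hy ha.le hb.le hab)) hopt

section Cone

variable {n k : ℕ}

theorem kCone_eq_iInter (n k : ℕ) :
    kCone n k = ⋂ (s : Finset (Fin n)) (_ : s.card = k), {z | 0 < ∑ i ∈ s, z i} := by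
  ext z
  simp [kCone]

theorem convex_kCone (n k : ℕ) : Convex ℝ (kCone n k) := by
  rw [kCone_eq_iInter]
  exact convex_iInter fun s => convex_iInter fun _ =>
    convex_halfSpace_gt ⟨fun x y => by simp [sum_add_distrib], fun c x => by simp [mul_sum]⟩ 0

theorem isOpen_kCone (n k : ℕ) : IsOpen (kCone n k) := by
  rw [kCone_eq_iInter]
  exact isOpen_iInter_of_finite fun s => isOpen_iInter_of_finite fun _ =>
    isOpen_lt continuous_const (continuous_finsetSum _ fun i _ => continuous_apply i)

theorem comp_perm_mem_kCone {z : Fin n → ℝ} (hz : z ∈ kCone n k) (σ : Equiv.Perm (Fin n)) :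
    z ∘ σ ∈ kCone n k := fun s hs => by
  simpa [sum_map] using hz (s.map σ.toEmbedding) (by rwa [card_map])

theorem const_one_mem_kCone (hk : 0 < k) : (fun _ => (1 : ℝ)) ∈ kCone n k := fun s hs => by
  simpa [hs] using hk

theorem sum_pos_of_mem_kCone (hk : 0 < k) {z : Fin n → ℝ} (hz : z ∈ kCone n k)
    {t : Finset (Fin n)} (ht : k ≤ t.card) : 0 < ∑ i ∈ t, z i := by
  obtain ⟨m, hm⟩ := Nat.exists_eq_add_of_le ht
  induction m generalizing t with
  | zero => exact hz t hm
  | succ m ih =>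
    have herase : ∀ j ∈ t, 0 < ∑ i ∈ t.erase j, z i := fun j hj =>
      ih (by rw [card_erase_of_mem hj]; omega) (by rw [card_erase_of_mem hj]; omega)
    have hsum : ∑ j ∈ t, ∑ i ∈ t.erase j, z i = ((k + m : ℕ) : ℝ) * ∑ i ∈ t, z i := by
      rw [sum_congr rfl fun j hj => sum_erase_eq_sub hj, sum_sub_distrib, sum_const, hm]
      push_cast
      ring
    have hpos : 0 < ((k + m : ℕ) : ℝ) * ∑ i ∈ t, z i :=
      hsum ▸ sum_pos herase (card_pos.1 (by omega))
    exact pos_of_mul_pos_right hpos (Nat.cast_nonneg _)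

theorem sum_univ_pos_of_mem_kCone (hk : 0 < k) (hkn : k ≤ n) {z : Fin n → ℝ}
    (hz : z ∈ kCone n k) : 0 < ∑ i, z i :=
  sum_pos_of_mem_kCone hk hz (by simpa using hkn)

end Cone

noncomputable def gammaRhoInv (n k : ℕ) (ρ : ℝ) (z : Fin n → ℝ) : ℝ :=
  (∑ s ∈ powersetCard k (univ : Finset (Fin n)), ρ / ∑ i ∈ s, z i) + (1 - ρ) / ∑ i, z i

section GammaRho

variable {n k : ℕ} {ρ : ℝ}

theorem gammaRhoInv_pos (hρ0 : 0 < ρ) (hρ1 : ρ ≤ 1) (hk : 0 < k) (hkn : k ≤ n)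
    {z : Fin n → ℝ} (hz : z ∈ kCone n k) : 0 < gammaRhoInv n k ρ z := by
  refine add_pos_of_pos_of_nonneg (sum_pos (fun s hs => ?_) ?_) ?_
  · exact div_pos hρ0 (hz s (mem_powersetCard_univ.1 hs))
  · exact powersetCard_nonempty.2 (by simpa using hkn)
  · exact div_nonneg (by linarith) (sum_univ_pos_of_mem_kCone hk hkn hz).le

theorem gammaRhoInv_smul_add_smul_le (hρ0 : 0 ≤ ρ) (hρ1 : ρ ≤ 1) (hk : 0 < k) (hkn : k ≤ n)
    {x y : Fin n → ℝ} (hx : x ∈ kCone n k) (hy : y ∈ kCone n k) {a b : ℝ} (ha : 0 < a)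
    (hb : 0 < b) (t : ℝ) :
    gammaRhoInv n k ρ (a • x + b • y) ≤
      t ^ 2 / a * gammaRhoInv n k ρ x + (1 - t) ^ 2 / b * gammaRhoInv n k ρ y := by
  have hterm : ∀ (u : Finset (Fin n)) {c : ℝ}, 0 ≤ c → 0 < ∑ i ∈ u, x i →
      0 < ∑ i ∈ u, y i → c / ∑ i ∈ u, (a • x + b • y) i ≤
        t ^ 2 / a * (c / ∑ i ∈ u, x i) + (1 - t) ^ 2 / b * (c / ∑ i ∈ u, y i) := by
    intro u c hc hux huy
    simpa [sum_add_distrib, mul_sum] using div_add_le_sq_div_add_sq_div ha hb hux huy hc t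
  calc gammaRhoInv n k ρ (a • x + b • y)
    _ ≤ (∑ s ∈ powersetCard k (univ : Finset (Fin n)),
          (t ^ 2 / a * (ρ / ∑ i ∈ s, x i) + (1 - t) ^ 2 / b * (ρ / ∑ i ∈ s, y i))) +
        (t ^ 2 / a * ((1 - ρ) / ∑ i, x i) + (1 - t) ^ 2 / b * ((1 - ρ) / ∑ i, y i)) := by
      refine add_le_add (sum_le_sum fun s hs => ?_) ?_
      · rw [mem_powersetCard_univ] at hs
        exact hterm s hρ0 (hx s hs) (hy s hs)
      · exact hterm univ (by linarith) (sum_univ_pos_of_mem_kCone hk hkn hx)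
          (sum_univ_pos_of_mem_kCone hk hkn hy)
    _ = _ := by
      simp only [gammaRhoInv, sum_add_distrib, ← mul_sum]
      ring

theorem concaveOn_gammaRho (hρ0 : 0 < ρ) (hρ1 : ρ ≤ 1) (hk : 0 < k) (hkn : k ≤ n) :
    ConcaveOn ℝ (kCone n k) (gammaRho n k ρ) :=
  concaveOn_inv_of_le_sq_div (convex_kCone n k) (fun _ hz => gammaRhoInv_pos hρ0 hρ1 hk hkn hz)
    fun _ hx _ hy _ _ ha hb _ t => gammaRhoInv_smul_add_smul_le hρ0.le hρ1 hk hkn hx hy ha hb t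

theorem gammaRho_smul (n k : ℕ) (ρ s : ℝ) (z : Fin n → ℝ) :
    gammaRho n k ρ (s • z) = s * gammaRho n k ρ z := by
  simp only [gammaRho, Pi.smul_apply, smul_eq_mul, ← mul_sum, div_mul_eq_div_div_swap,
    ← sum_div, ← add_div, inv_div]
  ring

theorem gammaRho_comp_perm (n k : ℕ) (ρ : ℝ) (z : Fin n → ℝ) (σ : Equiv.Perm (Fin n)) :
    gammaRho n k ρ (z ∘ σ) = gammaRho n k ρ z := by
  have hsets : powersetCard k (univ : Finset (Fin n)) =
      (powersetCard k univ).map (mapEmbedding σ.toEmbedding).toEmbedding := by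
    rw [← powersetCard_map, map_univ_equiv]
  simp only [gammaRho, Function.comp_apply, Equiv.sum_comp σ z]
  conv_rhs => rw [hsets, sum_map]
  simp [sum_map]

theorem differentiableAt_gammaRho (hρ0 : 0 < ρ) (hρ1 : ρ ≤ 1) (hk : 0 < k) (hkn : k ≤ n)
    {z : Fin n → ℝ} (hz : z ∈ kCone n k) : DifferentiableAt ℝ (gammaRho n k ρ) z := by
  have hsets : ∀ s ∈ powersetCard k (univ : Finset (Fin n)), ∑ i ∈ s, z i ≠ 0 :=
    fun s hs => (hz s (mem_powersetCard_univ.1 hs)).ne'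
  have huniv := (sum_univ_pos_of_mem_kCone hk hkn hz).ne'
  have hinv := (gammaRhoInv_pos hρ0 hρ1 hk hkn hz).ne'
  simp only [gammaRhoInv] at hinv
  unfold gammaRho
  fun_prop (disch := simp_all)

theorem gammaOne_le_gammaRho_const_one (hρ0 : 0 < ρ) (hρ1 : ρ ≤ 1)
    (hk : 0 < k) (hkn : k ≤ n) :
    gammaOne n k (fun _ => 1) ≤ gammaRho n k ρ (fun _ => 1) := by
  have hsets : ∀ c : ℝ, ∑ s ∈ powersetCard k (univ : Finset (Fin n)), c / ∑ _i ∈ s, (1 : ℝ) =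
      n.choose k * (c / k) := fun c => by
    rw [sum_congr rfl fun s hs => by rw [sum_const, (mem_powersetCard_univ.1 hs)]]
    simp
  have hk' : (0 : ℝ) < k := by exact_mod_cast hk
  have hkn' : (k : ℝ) ≤ n := by exact_mod_cast hkn
  have hC : (1 : ℝ) ≤ n.choose k := by exact_mod_cast Nat.choose_pos hkn
  have htr : 1 / (n : ℝ) ≤ n.choose k * (1 / k) := by
    rw [mul_one_div, div_le_div_iff₀ (by linarith) hk']
    nlinarith
  simp only [gammaOne, gammaRho, inv_eq_one_div]
  rw [hsets, hsets]
  simp only [sum_const, card_univ, Fintype.card_fin, nsmul_eq_mul, mul_one]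
  apply one_div_le_one_div_of_le (add_pos_of_pos_of_nonneg (by positivity)
    (div_nonneg (by linarith) (Nat.cast_nonneg n)))
  have hsplit : (n.choose k : ℝ) * (ρ / k) + (1 - ρ) / n =
      ρ * (n.choose k * (1 / k)) + (1 - ρ) * (1 / n) := by ring
  rw [hsplit]
  nlinarith

end GammaRho

theorem shifted_speed_properties (n k : ℕ) (hk3 : 3 ≤ k) (hkn : k ≤ n - 1)
    (ρ : ℝ) (hρ0 : 0 < ρ) (hρ1 : ρ ≤ 1) (μ : ℝ)
    (hcyl : ∀ m : ℕ, m ≤ k - 1 →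
      μ * (∑ i, (fun i : Fin n => if (i : ℕ) < m then (0 : ℝ) else 1) i) <
        gammaOne n k (fun i : Fin n => if (i : ℕ) < m then (0 : ℝ) else 1)) :
    0 < gammaRho n k ρ (fun _ => 1) - μ * (∑ _i : Fin n, (1 : ℝ)) ∧
    (∀ (σ : Equiv.Perm (Fin n)), ∀ z ∈ kCone n k,
      gammaRho n k ρ (z ∘ σ) - μ * (∑ i, (z ∘ σ) i) =
        gammaRho n k ρ z - μ * (∑ i, z i)) ∧
    ConcaveOn ℝ (kCone n k) (fun z => gammaRho n k ρ z - μ * (∑ i, z i)) ∧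
    (∀ (s : ℝ), 0 < s → ∀ z ∈ kCone n k,
      gammaRho n k ρ (s • z) - μ * (∑ i, (s • z) i) =
        s * (gammaRho n k ρ z - μ * (∑ i, z i))) ∧
    ∀ z ∈ kCone n k, Monotone z →
      μ ≤ fderiv ℝ (gammaRho n k ρ) z (Pi.single (⟨0, by omega⟩ : Fin n) 1) := by
  have hk : 0 < k := by omega
  have hkn' : k ≤ n := by omega
  let trace : (Fin n → ℝ) →L[ℝ] ℝ := μ • ∑ i, ContinuousLinearMap.proj i
  have htrace : ⇑trace = fun z => μ * ∑ i, z i := by ext; simp [trace]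
  have hpos : 0 < gammaRho n k ρ (fun _ => 1) - μ * ∑ _i : Fin n, (1 : ℝ) := by
    have h := hcyl 0 (Nat.zero_le _)
    simp only [Nat.not_lt_zero, if_false] at h
    linarith [gammaOne_le_gammaRho_const_one (n := n) hρ0 hρ1 hk hkn']
  have hperm : ∀ (σ : Equiv.Perm (Fin n)), ∀ z ∈ kCone n k,
      gammaRho n k ρ (z ∘ σ) - μ * ∑ i, (z ∘ σ) i = gammaRho n k ρ z - μ * ∑ i, z i :=
    fun σ z _ => by rw [gammaRho_comp_perm, Function.comp_def, Equiv.sum_comp σ z]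
  have hconc : ConcaveOn ℝ (kCone n k) fun z => gammaRho n k ρ z - μ * ∑ i, z i := by
    have h := (concaveOn_gammaRho hρ0 hρ1 hk hkn').sub
      (trace.toLinearMap.convexOn (convex_kCone n k))
    rwa [ContinuousLinearMap.coe_coe, htrace] at h
  have hhom : ∀ s : ℝ, 0 < s → ∀ z ∈ kCone n k,
      gammaRho n k ρ (s • z) - μ * ∑ i, (s • z) i = s * (gammaRho n k ρ z - μ * ∑ i, z i) :=
    fun s _ z _ => by simp only [gammaRho_smul, Pi.smul_apply, smul_eq_mul, ← mul_sum]; ring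
  refine ⟨hpos, hperm, hconc, hhom, fun z hz hmono => ?_⟩
  have htrace' := trace.hasFDerivAt (x := z)
  rw [htrace] at htrace'
  have hderiv := (differentiableAt_gammaRho hρ0 hρ1 hk hkn' hz).hasFDerivAt.sub htrace'
  have := hconc.fderiv_single_nonneg_of_isMin (i := ⟨0, by omega⟩) (isOpen_kCone n k)
    (fun σ w hw => comp_perm_mem_kCone hw σ) hperm hhom (const_one_mem_kCone hk) hpos.le hz
    hderiv fun j => hmono (Fin.le_def.2 (Nat.zero_le _))
  simpa [trace, Pi.single_apply] using this
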